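/- Let A, B ∈ ℂ with A(A+B) ≠ 0, let (a₃, a₄, a₅, θ) ∈ ℂ⁴, and let (a₃', a₄', a₅', θ') = S_{A,B}(a₃, a₄, a₅, θ). Then a₅' + 5a₃'a₄' + 5a₃'³ = (A+B)(a₅ + 5a₃a₄ + 5a₃³)/A⁴ and θ' − a₅' = (θ − a₅)/A³. -/
import Mathlib


noncomputable def S (A B : ℂ) (p : ℂ × ℂ × ℂ × ℂ) : ℂ × ℂ × ℂ × ℂ :=
  let a3 := p.1
  let a4 := p.2.1
  let a5 := p.2.2.1
  let th := p.2.2.2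
  let a3' := (A + B) * a3 / A ^ 2
  let a4' := ((A + B) * a4 - 2 * A * B * a3 * a3') / A ^ 3
  (a3', a4',
   ((A + B) * a5 - (2 * A * B * a4 + B ^ 2 * a3 ^ 2) * a3' - 3 * A ^ 2 * B * a3 * a4') / A ^ 4,
   (A * th + B * a5 - (2 * A * B * a4 + B ^ 2 * a3 ^ 2) * a3' - 3 * A ^ 2 * B * a3 * a4') / A ^ 4)

theorem S_invariants (A B : ℂ) (h : A * (A + B) ≠ 0) (a₃ a₄ a₅ θ : ℂ)
    (a₃' a₄' a₅' θ' : ℂ) (heq : (a₃', a₄', a₅', θ') = S A B (a₃, a₄, a₅, θ)) :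
    a₅' + 5 * a₃' * a₄' + 5 * a₃' ^ 3
      = (A + B) * (a₅ + 5 * a₃ * a₄ + 5 * a₃ ^ 3) / A ^ 4 ∧
    θ' - a₅' = (θ - a₅) / A ^ 3 := by
  have hA : A ≠ 0 := fun hA => h (by rw [hA]; ring)
  have hI : A * A⁻¹ = 1 := mul_inv_cancel₀ hA
  simp only [S, Prod.mk.injEq] at heq
  obtain ⟨h3, h4, h5, ht⟩ := heq
  subst h3 h4 h5 ht
  constructor
  · linear_combination (5*A⁻¹^4*B*a₃*a₄ + 5*A⁻¹^4*B*a₃^3 - 5*A⁻¹^5*B^2*a₃*a₄ - 4*A⁻¹^6*B^3*a₃^3 + 5*A*A⁻¹^4*a₃*a₄ + 5*A*A⁻¹^4*a₃^3 - 5*A*A⁻¹^5*B*a₃*a₄ + 5*A*A⁻¹^5*B*a₃^3 - 3*A*A⁻¹^6*B^2*a₃*a₄ - 14*A*A⁻¹^6*B^2*a₃^3 + 6*A*A⁻¹^7*B^3*a₃^3 + 5*A^2*A⁻¹^5*a₃^3 - 3*A^2*A⁻¹^6*B*a₃*a₄ - 10*A^2*A⁻¹^6*B*a₃^3 + 6*A^2*A⁻¹^7*B^2*a₃^3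 + 6*A^2*A⁻¹^8*B^3*a₃^3 + 6*A^3*A⁻¹^8*B^2*a₃^3) * hI
  · rw [div_sub_div_same, eq_div_iff (pow_ne_zero _ hA), div_mul_eq_mul_div,
      div_eq_iff (pow_ne_zero _ hA)]
    ring
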